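/- Let A be a unital simple C*-algebra, α an automorphism of A with the Rokhlin property, and p a supernatural number. Then the automorphism α ⊗ id of A ⊗ M_p has the Rokhlin property. -/

import Mathlib

/-!
Common definitions for formalizing "The Rokhlin property for automorphisms on simple
C*-algebras" (Jiajie Hua).

Deep external notions that cannot reasonably be constructed here (the Universal Coefficient
Theorem and Rørdam's `KL`-groups) are abstracted into a parameter structure `CStarTheory`,
whose fields record the properties used in the statements.  All remaining notions
(tracial states, tracial rank zero, the (tracial/cyclic) Rokhlin properties, UHF algebras,
minimal tensor products, crossed products by `ℤ`, nuclearity, the Jiang–Su algebra,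
`𝒵`-stability, the Elliott invariant, decomposition rank, …) are defined genuinely.
-/

noncomputable section

open Matrix

/-- A projection in a `*`-ring: a self-adjoint idempotent. -/
def IsProjection {A : Type*} [Mul A] [Star A] (p : A) : Prop :=
  star p = p ∧ p * p = p

/-- An element of the form `star x * x`; in a C*-algebra these are exactly the positive
elements. -/
def StarPos {A : Type*} [Mul A] [Star A] (a : A) : Prop :=
  ∃ x, a = star x * x

/-- `[p] ≤ [a]` : the projection `p` is Murray–von Neumann equivalent to a projection in the
hereditary C*-subalgebra `closure (a A a)` generated by the positive element `a`. -/
def SubEquivHer {A : Type*} [CStarAlgebra A] (p a : A) : Prop :=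
  ∃ q v : A, IsProjection q ∧ q ∈ closure {x : A | ∃ y : A, x = a * y * a} ∧
    star v * v = p ∧ v * star v = q

/-- A tracial state on a unital C*-algebra, as a weak-* continuous functional:
unital, positive, and tracial. -/
def IsTracialState {A : Type*} [CStarAlgebra A] (τ : WeakDual ℂ A) : Prop :=
  τ 1 = 1 ∧ (∀ a : A, 0 ≤ (τ (star a * a)).re ∧ (τ (star a * a)).im = 0) ∧
    ∀ a b : A, τ (a * b) = τ (b * a)

/-- The space `T(A)` of tracial states of `A`, with the weak-* topology. -/
abbrev TracialState (A : Type*) [CStarAlgebra A] : Type _ :=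
  {τ : WeakDual ℂ A // IsTracialState τ}

/-- An element of a matrix algebra `Mₙ(A)` over `A`, for some size `n`. -/
def MatElem (A : Type*) : Type _ := Σ n : ℕ, Matrix (Fin n) (Fin n) A

namespace MatElem

variable {A : Type*}

/-- A projection in a matrix algebra over `A`. -/
def IsProj [NonUnitalSemiring A] [StarRing A] (p : MatElem A) : Prop :=
  p.2ᴴ = p.2 ∧ p.2 * p.2 = p.2

/-- A unitary in a matrix algebra over `A`. -/
def IsUnitary [Semiring A] [StarRing A] (u : MatElem A) : Prop :=
  u.2ᴴ * u.2 = 1 ∧ u.2 * u.2ᴴ = 1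

/-- Murray–von Neumann equivalence of projections over `A` (allowing rectangular partial
isometries, hence implementing stable equivalence). -/
def MvN [NonUnitalSemiring A] [StarRing A] (p q : MatElem A) : Prop :=
  ∃ v : Matrix (Fin q.1) (Fin p.1) A, vᴴ * v = p.2 ∧ v * vᴴ = q.2

/-- The block-diagonal direct sum `p ⊕ q` of two matrices over `A`. -/
def dSum [Zero A] (p q : MatElem A) : MatElem A :=
  ⟨p.1 + q.1, (Matrix.fromBlocks p.2 0 0 q.2).submatrix
    (fun i => finSumFinEquiv.symm i) (fun i => finSumFinEquiv.symm i)⟩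

/-- The canonical extension of a tracial state to matrix algebras over `A`. -/
def traceBy [CStarAlgebra A] (τ : TracialState A) (p : MatElem A) : ℂ :=
  ∑ i, (τ : WeakDual ℂ A) (p.2 i i)

/-- Pad a matrix over `A` to size `N` by a block-diagonal direct sum with the
identity matrix of size `N - n`. -/
def pad [Semiring A] (u : MatElem A) (N : ℕ) (h : u.1 ≤ N) :
    Matrix (Fin N) (Fin N) A :=
  (Matrix.fromBlocks u.2 0 0 (1 : Matrix (Fin (N - u.1)) (Fin (N - u.1)) A)).submatrix
    (fun i => finSumFinEquiv.symm (Fin.cast (Nat.add_sub_cancel' h).symm i))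
    (fun i => finSumFinEquiv.symm (Fin.cast (Nat.add_sub_cancel' h).symm i))

/-- `K₁`-equivalence of unitaries over `A`: after padding with `1`'s they are connected by a
continuous path of unitary matrices. -/
def K1Equiv [CStarAlgebra A] (u v : MatElem A) : Prop :=
  ∃ (N : ℕ) (hu : u.1 ≤ N) (hv : v.1 ≤ N) (γ : Path (u.pad N hu) (v.pad N hv)),
    ∀ t, (γ t)ᴴ * γ t = 1 ∧ γ t * (γ t)ᴴ = 1

end MatElem

/-- A C*-algebra has real rank zero if the invertible self-adjoint elements are dense in the
self-adjoint elements. -/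
def RealRankZero (A : Type*) [CStarAlgebra A] : Prop :=
  ∀ a : A, IsSelfAdjoint a → ∀ ε > (0 : ℝ), ∃ b : A, IsSelfAdjoint b ∧ IsUnit b ∧ ‖a - b‖ < ε

/-- A `*`-ring is stably finite if every isometry in every matrix algebra over it is a
unitary. -/
def StablyFinite (A : Type*) [Semiring A] [StarRing A] : Prop :=
  ∀ (n : ℕ) (v : Matrix (Fin n) (Fin n) A), vᴴ * v = 1 → v * vᴴ = 1

/-- The order on projections over `A` is determined by traces: if `τ(p) < τ(q)` for every
tracial state `τ`, then `p` is Murray–von Neumann equivalent to a subprojection of `q`. -/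
def OrderDeterminedByTraces (A : Type*) [CStarAlgebra A] : Prop :=
  ∀ p q : MatElem A, p.IsProj → q.IsProj →
    (∀ τ : TracialState A, (p.traceBy τ).re < (q.traceBy τ).re) →
    ∃ p' : Matrix (Fin q.1) (Fin q.1) A,
      MatElem.IsProj (A := A) ⟨q.1, p'⟩ ∧ p' * q.2 = p' ∧ p.MvN ⟨q.1, p'⟩

/-- A C*-algebra is simple if it has no closed two-sided ideals other than `⊥` and `⊤`. -/
def SimpleCStar (A : Type*) [CStarAlgebra A] : Prop :=
  ∀ I : TwoSidedIdeal A, IsClosed (I : Set A) → I = ⊥ ∨ I = ⊤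

/-- Tracial (topological) rank zero, in the sense of H. Lin. -/
def TracialRankZero (A : Type*) [CStarAlgebra A] : Prop :=
  ∀ ε > (0 : ℝ), ∀ F : Finset A, ∀ a : A, StarPos a → a ≠ 0 →
    ∃ B : StarSubalgebra ℂ A, FiniteDimensional ℂ B ∧
      ∃ p : A, IsProjection p ∧ p ∈ B ∧ (∀ b ∈ B, p * b = b ∧ b * p = b) ∧
        (∀ x ∈ F, ‖p * x - x * p‖ < ε) ∧
        (∀ x ∈ F, ∃ b ∈ B, ‖p * x * p - b‖ < ε) ∧
        SubEquivHer (1 - p) a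

/-- The tracial Rokhlin property for an automorphism `α` of a unital C*-algebra. -/
def TracialRokhlin {A : Type*} [CStarAlgebra A] (α : A ≃⋆ₐ[ℂ] A) : Prop :=
  ∀ ε > (0 : ℝ), ∀ n : ℕ, ∀ a : A, StarPos a → a ≠ 0 → ∀ F : Finset A,
    ∃ e : Fin (n + 1) → A, (∀ j, IsProjection (e j)) ∧
      (∀ i j, i ≠ j → e i * e j = 0) ∧
      (∀ j : Fin n, ‖α (e j.castSucc) - e j.succ‖ < ε) ∧
      (∀ j, ∀ b ∈ F, ‖e j * b - b * e j‖ < ε) ∧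
      SubEquivHer (1 - ∑ j, e j) a

/-- The Rokhlin property for an automorphism `α` of a unital simple C*-algebra. -/
def RokhlinProperty {A : Type*} [CStarAlgebra A] (α : A ≃⋆ₐ[ℂ] A) : Prop :=
  ∀ ε > (0 : ℝ), ∀ n : ℕ, ∀ F : Finset A,
    ∃ (e : Fin n → A) (f : Fin (n + 1) → A),
      (∀ j, IsProjection (e j)) ∧ (∀ j, IsProjection (f j)) ∧
      (∀ i j, i ≠ j → e i * e j = 0) ∧ (∀ i j, i ≠ j → f i * f j = 0) ∧
      (∀ i j, e i * f j = 0 ∧ f j * e i = 0) ∧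
      (∀ (j : ℕ) (h : j + 1 < n), ‖α (e ⟨j, Nat.lt_of_succ_lt h⟩) - e ⟨j + 1, h⟩‖ < ε) ∧
      (∀ (j : ℕ) (h : j + 1 < n + 1), ‖α (f ⟨j, Nat.lt_of_succ_lt h⟩) - f ⟨j + 1, h⟩‖ < ε) ∧
      (∀ j, ∀ b ∈ F, ‖e j * b - b * e j‖ < ε) ∧
      (∀ j, ∀ b ∈ F, ‖f j * b - b * f j‖ < ε) ∧
      ((∑ j, e j) + ∑ j, f j) = 1

/-- The cyclic successor `j ↦ j + 1 (mod n)` on `Fin n`. -/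
def Fin.cycSucc {n : ℕ} (j : Fin n) : Fin n := ⟨(j.1 + 1) % n, Nat.mod_lt _ j.pos⟩

/-- The cyclic Rokhlin property: as the Rokhlin property, but the towers wrap around. -/
def CyclicRokhlin {A : Type*} [CStarAlgebra A] (α : A ≃⋆ₐ[ℂ] A) : Prop :=
  ∀ ε > (0 : ℝ), ∀ n : ℕ, ∀ F : Finset A,
    ∃ (e : Fin n → A) (f : Fin (n + 1) → A),
      (∀ j, IsProjection (e j)) ∧ (∀ j, IsProjection (f j)) ∧
      (∀ i j, i ≠ j → e i * e j = 0) ∧ (∀ i j, i ≠ j → f i * f j = 0) ∧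
      (∀ i j, e i * f j = 0 ∧ f j * e i = 0) ∧
      (∀ j : Fin n, ‖α (e j) - e j.cycSucc‖ < ε) ∧
      (∀ j : Fin (n + 1), ‖α (f j) - f j.cycSucc‖ < ε) ∧
      (∀ j, ∀ b ∈ F, ‖e j * b - b * e j‖ < ε) ∧
      (∀ j, ∀ b ∈ F, ‖f j * b - b * f j‖ < ε) ∧
      ((∑ j, e j) + ∑ j, f j) = 1

/-- A supernatural number: a formal product `∏ p ^ s p` over the primes, with
`s p ∈ ℕ ∪ {∞}`. -/
def SupernaturalNumber : Type := Nat.Primes → ℕ∞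

/-- A supernatural number is of infinite type if every prime that occurs occurs with infinite
multiplicity. -/
def SupernaturalNumber.InfiniteType (s : SupernaturalNumber) : Prop :=
  ∀ p, s p = 0 ∨ s p = ⊤

/-- `M` is the UHF algebra associated with the supernatural number `s`: it is the closure of an
increasing union of full matrix subalgebras whose sizes have `s` as their limit. -/
def IsUHF (s : SupernaturalNumber) (M : Type*) [CStarAlgebra M] : Prop :=
  ∃ (k : ℕ → ℕ) (B : ℕ → StarSubalgebra ℂ M),
    (∀ n, 0 < k n) ∧ (∀ n, k n ∣ k (n + 1)) ∧ Monotone B ∧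
    (∀ n, Nonempty (B n ≃⋆ₐ[ℂ] Matrix (Fin (k n)) (Fin (k n)) ℂ)) ∧
    Dense (⋃ n, (B n : Set M)) ∧
    (∀ p : Nat.Primes, s p = ⨆ n, ((k n).factorization p : ℕ∞))

/-- A bundled (unital) C*-algebra, used to quantify over "all C*-algebras" in universal
properties. -/
structure CStarAlg : Type 1 where
  /-- the underlying type -/
  carrier : Type
  /-- the C*-algebra structure -/
  [inst : CStarAlgebra carrier]

attribute [instance] CStarAlg.inst

instance : CoeSort CStarAlg Type := ⟨CStarAlg.carrier⟩

/-- `D`, together with the commuting unital embeddings `jA`, `jB`, is a C*-completion of the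
algebraic tensor product `A ⊙ B`; i.e. `D` carries a C*-norm on `A ⊙ B`. -/
structure IsTensorCompletion (A B D : Type*) [CStarAlgebra A] [CStarAlgebra B] [CStarAlgebra D]
    (jA : A →⋆ₐ[ℂ] D) (jB : B →⋆ₐ[ℂ] D) : Prop where
  injA : Function.Injective jA
  injB : Function.Injective jB
  commutes : ∀ a b, jA a * jB b = jB b * jA a
  dense : Dense ((Submodule.span ℂ {x : D | ∃ a b, x = jA a * jB b} : Submodule ℂ D) : Set D)
  faithful : ∀ (n : ℕ) (a : Fin n → A) (b : Fin n → B), LinearIndependent ℂ b →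
    (∑ i, jA (a i) * jB (b i)) = 0 → ∀ i, a i = 0

/-- `T` is the minimal (spatial) tensor product `A ⊗ B`: the C*-completion of `A ⊙ B` whose
norm is dominated by (so which is a quotient of) every other C*-completion. -/
def IsMinTensor (A B T : Type*) [CStarAlgebra A] [CStarAlgebra B] [CStarAlgebra T]
    (ιA : A →⋆ₐ[ℂ] T) (ιB : B →⋆ₐ[ℂ] T) : Prop :=
  IsTensorCompletion A B T ιA ιB ∧
  ∀ (D : CStarAlg) (jA : A →⋆ₐ[ℂ] D) (jB : B →⋆ₐ[ℂ] D),
    IsTensorCompletion A B D jA jB →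
    ∃ π : D →⋆ₐ[ℂ] T, (∀ a, π (jA a) = ιA a) ∧ ∀ b, π (jB b) = ιB b

/-- Nuclearity (= amenability) of a unital C*-algebra: for every C*-algebra `B` there is a
unique C*-norm on `A ⊙ B`, i.e. any two C*-completions are compatibly isomorphic. -/
def NuclearCStar (A : Type*) [CStarAlgebra A] : Prop :=
  ∀ (B D₁ D₂ : CStarAlg) (jA₁ : A →⋆ₐ[ℂ] D₁) (jB₁ : B.carrier →⋆ₐ[ℂ] D₁)
    (jA₂ : A →⋆ₐ[ℂ] D₂) (jB₂ : B.carrier →⋆ₐ[ℂ] D₂),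
    IsTensorCompletion A B D₁ jA₁ jB₁ → IsTensorCompletion A B D₂ jA₂ jB₂ →
    ∃ Φ : D₁.carrier ≃⋆ₐ[ℂ] D₂.carrier, (∀ a, Φ (jA₁ a) = jA₂ a) ∧ ∀ b, Φ (jB₁ b) = jB₂ b

/-- `C` (together with the embedding `ι` and the unitary `u`) is the crossed product
`A ⋊_α ℤ`: `u` implements `α`, the span of the `ι a * uⁱ` is dense, and `C` is universal for
covariant pairs. -/
structure IsCrossedProduct {A C : Type*} [CStarAlgebra A] [CStarAlgebra C]
    (α : A ≃⋆ₐ[ℂ] A) (ι : A →⋆ₐ[ℂ] C) (u : unitary C) : Prop where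
  inj : Function.Injective ι
  covariant : ∀ a, star (u : C) * ι a * (u : C) = ι (α a)
  dense : Dense ((Submodule.span ℂ
    {x : C | ∃ (a : A) (i : ℤ), x = ι a * ((u ^ i : unitary C) : C)} : Submodule ℂ C) : Set C)
  universal : ∀ (D : CStarAlg) (ρ : A →⋆ₐ[ℂ] D) (w : unitary D),
    (∀ a, star (w : D) * ρ a * (w : D) = ρ (α a)) →
    ∃ ψ : C →⋆ₐ[ℂ] D, (∀ a, ψ (ι a) = ρ a) ∧ ψ (u : C) = (w : D)

/-- The `J`-th power of an automorphism, as a `*`-homomorphism. -/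
def StarAlgEquiv.powHom {A : Type*} [CStarAlgebra A] (α : A ≃⋆ₐ[ℂ] A) : ℕ → (A →⋆ₐ[ℂ] A)
  | 0 => StarAlgHom.id ℂ A
  | n + 1 => (StarAlgEquiv.powHom α n).comp (α : A →⋆ₐ[ℂ] A)

/-- Abstract background data for the two notions from Kasparov/Rørdam theory used in the paper:
the Universal Coefficient Theorem (a property of a C*-algebra) and equality of classes in
Rørdam's group `KL(A,A)` (a relation between `*`-homomorphisms `A → A`).  These cannot be
constructed in the present development, so they enter the statements as a parameter. -/
structure CStarTheory : Type 1 where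
  /-- `UCT A` means that `A` satisfies the Universal Coefficient Theorem of
  Rosenberg–Schochet. -/
  UCT : ∀ (A : Type) [inst : CStarAlgebra A], Prop
  /-- satisfying the UCT is invariant under `*`-isomorphism -/
  uct_congr : ∀ {A B : Type} [instA : CStarAlgebra A] [instB : CStarAlgebra B],
    (A ≃⋆ₐ[ℂ] B) → UCT A → UCT B
  /-- `KLeq A φ ψ` means `[φ] = [ψ]` in Rørdam's group `KL(A,A)`. -/
  KLeq : ∀ (A : Type) [inst : CStarAlgebra A], (A →⋆ₐ[ℂ] A) → (A →⋆ₐ[ℂ] A) → Prop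
  /-- equality in `KL(A,A)` is an equivalence relation -/
  kleq_equivalence : ∀ (A : Type) [inst : CStarAlgebra A], Equivalence (KLeq A)

/-- The class `𝒜`: unital separable simple amenable C*-algebras satisfying the UCT such that
`A ⊗ M_p` has tracial rank zero for some supernatural number `p` of infinite type. -/
def InClassA (𝕋 : CStarTheory) (A : Type) [CStarAlgebra A] : Prop :=
  TopologicalSpace.SeparableSpace A ∧ SimpleCStar A ∧ NuclearCStar A ∧ 𝕋.UCT A ∧
  ∃ s : SupernaturalNumber, s.InfiniteType ∧
    ∃ (M T : CStarAlg) (ιA : A →⋆ₐ[ℂ] T) (ιM : M.carrier →⋆ₐ[ℂ] T),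
      IsUHF s M ∧ IsMinTensor A M T ιA ιM ∧ TracialRankZero T
/-- Evaluation at a point as a unital `*`-homomorphism (for a possibly noncommutative
topological `*`-algebra `R`). -/
def evalStarAlgHom' {X R : Type*} [TopologicalSpace X] [TopologicalSpace R] [Ring R]
    [Algebra ℂ R] [IsTopologicalRing R] [StarRing R] [ContinuousStar R] (x : X) :
    C(X, R) →⋆ₐ[ℂ] R where
  toFun f := f x
  map_one' := rfl
  map_mul' _ _ := rfl
  map_zero' := rfl
  map_add' _ _ := rfl
  commutes' _ := rfl
  map_star' _ := rfl

/-- The dimension drop algebra: continuous functions `f : [0,1] → Mₙ(ℂ)` with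
`f 0 ∈ S₀` and `f 1 ∈ S₁`. -/
def dimDropAlgebra (n : ℕ) (S₀ S₁ : StarSubalgebra ℂ (Matrix (Fin n) (Fin n) ℂ)) :
    StarSubalgebra ℂ C(unitInterval, Matrix (Fin n) (Fin n) ℂ) :=
  (S₀.comap (evalStarAlgHom' 0)) ⊓ (S₁.comap (evalStarAlgHom' 1))

/-- A prime dimension drop algebra: for coprime `p`, `q`, the algebra of continuous
`f : [0,1] → M_{pq}(ℂ)` with `f 0` in a copy of `M_p(ℂ)` and `f 1` in a copy of
`M_q(ℂ)`. -/
def IsPrimeDimDrop (D : Type*) [Add D] [Mul D] [SMul ℂ D] [Star D] : Prop :=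
  ∃ p q : ℕ, 0 < p ∧ 0 < q ∧ Nat.Coprime p q ∧
    ∃ S₀ S₁ : StarSubalgebra ℂ (Matrix (Fin (p * q)) (Fin (p * q)) ℂ),
      Nonempty (S₀ ≃⋆ₐ[ℂ] Matrix (Fin p) (Fin p) ℂ) ∧
      Nonempty (S₁ ≃⋆ₐ[ℂ] Matrix (Fin q) (Fin q) ℂ) ∧
      Nonempty (D ≃⋆ₐ[ℂ] dimDropAlgebra (p * q) S₀ S₁)

/-- The Jiang–Su algebra `𝒵`: a unital infinite-dimensional simple C*-algebra which is an
inductive limit of prime dimension drop algebras, has a unique tracial state,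
`(K₀, K₀₊, [1]) ≅ (ℤ, ℕ, 1)` and `K₁ = 0`. -/
def IsJiangSu (Z : Type*) [CStarAlgebra Z] : Prop :=
  SimpleCStar Z ∧ (¬ FiniteDimensional ℂ Z) ∧
  (∃ B : ℕ → StarSubalgebra ℂ Z, Monotone B ∧ (∀ n, IsPrimeDimDrop (B n)) ∧
    Dense (⋃ n, (B n : Set Z))) ∧
  (∃! τ : TracialState Z, True) ∧
  (∀ τ : TracialState Z,
    (∀ p : MatElem Z, p.IsProj → ∃ k : ℕ, p.traceBy τ = k) ∧
    (∀ k : ℕ, ∃ p : MatElem Z, p.IsProj ∧ p.traceBy τ = k) ∧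
    (∀ p q : MatElem Z, p.IsProj → q.IsProj → (p.MvN q ↔ p.traceBy τ = q.traceBy τ))) ∧
  (∀ u : MatElem Z, u.IsUnitary →
    u.K1Equiv ⟨1, (1 : Matrix (Fin 1) (Fin 1) Z)⟩)

/-- `A` is `𝒵`-stable if `A ⊗ 𝒵 ≅ A`. -/
def ZStable (A : Type*) [CStarAlgebra A] : Prop :=
  ∃ (Z T : CStarAlg) (ιA : A →⋆ₐ[ℂ] T) (ιZ : Z.carrier →⋆ₐ[ℂ] T),
    IsJiangSu Z.carrier ∧ IsMinTensor A Z T ιA ιZ ∧ Nonempty (T.carrier ≃⋆ₐ[ℂ] A)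

/-- An isomorphism `Ell(A) ≅ Ell(B)` of Elliott invariants, encoded on representatives:
`F` induces an isomorphism `(K₀(A), K₀(A)₊, [1_A]) ≅ (K₀(B), K₀(B)₊, [1_B])`, `U` induces an
isomorphism `K₁(A) ≅ K₁(B)`, and `Tmap` is an affine homeomorphism `T(B) ≅ T(A)` compatible
with `F` under the pairing between traces and `K₀`. -/
structure EllIso (A B : Type*) [CStarAlgebra A] [CStarAlgebra B] where
  F : MatElem A → MatElem B
  F_proj : ∀ p : MatElem A, p.IsProj → (F p).IsProj
  F_mvn_iff : ∀ p q : MatElem A, p.IsProj → q.IsProj → (p.MvN q ↔ (F p).MvN (F q))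
  F_surj : ∀ q : MatElem B, q.IsProj → ∃ p : MatElem A, p.IsProj ∧ (F p).MvN q
  F_add : ∀ p q : MatElem A, p.IsProj → q.IsProj → ((F (p.dSum q)).MvN ((F p).dSum (F q)))
  F_one : (F ⟨1, (1 : Matrix (Fin 1) (Fin 1) A)⟩).MvN ⟨1, (1 : Matrix (Fin 1) (Fin 1) B)⟩
  U : MatElem A → MatElem B
  U_unitary : ∀ u : MatElem A, u.IsUnitary → (U u).IsUnitary
  U_k1_iff : ∀ u v : MatElem A, u.IsUnitary → v.IsUnitary →
    (u.K1Equiv v ↔ (U u).K1Equiv (U v))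
  U_surj : ∀ v : MatElem B, v.IsUnitary → ∃ u : MatElem A, u.IsUnitary ∧ (U u).K1Equiv v
  U_add : ∀ u v : MatElem A, u.IsUnitary → v.IsUnitary →
    ((U (u.dSum v)).K1Equiv ((U u).dSum (U v)))
  Tmap : TracialState B ≃ₜ TracialState A
  Tmap_affine : ∀ (σ σ' ρ : TracialState B) (t : ℝ), 0 ≤ t → t ≤ 1 →
    (ρ : WeakDual ℂ B) = (t : ℂ) • (σ : WeakDual ℂ B) + ((1 - t : ℝ) : ℂ) • (σ' : WeakDual ℂ B) →
    (Tmap ρ : WeakDual ℂ A) =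
      (t : ℂ) • (Tmap σ : WeakDual ℂ A) + ((1 - t : ℝ) : ℂ) • (Tmap σ' : WeakDual ℂ A)
  Tmap_compat : ∀ (τ : TracialState B) (p : MatElem A), p.IsProj →
    p.traceBy (Tmap τ) = (F p).traceBy τ

/-- A positive matrix over a `*`-ring. -/
def MatIsPos {A : Type*} [NonUnitalSemiring A] [StarRing A] {m : ℕ}
    (M : Matrix (Fin m) (Fin m) A) : Prop :=
  ∃ x : Matrix (Fin m) (Fin m) A, M = xᴴ * x

/-- A finite-dimensional C*-algebra, presented as a finite direct sum of matrix algebras. -/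
abbrev BlockAlg (N : ℕ) (k : Fin N → ℕ) : Type :=
  ∀ i : Fin N, Matrix (Fin (k i)) (Fin (k i)) ℂ

/-- `dr(S) ≤ n` for a (closed, unital) C*-subalgebra `S` of `A`: completely positive
contractive approximation of `id_S` through finite-dimensional algebras by maps which are
`(n+1)`-colourably order zero. -/
def DecompRankLe {A : Type*} [CStarAlgebra A] (S : StarSubalgebra ℂ A) (n : ℕ) : Prop :=
  ∀ G : Finset A, (∀ b ∈ G, b ∈ S) → ∀ ε > (0 : ℝ),
    ∃ (N : ℕ) (k : Fin N → ℕ) (c : Fin N → Fin (n + 1))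
      (ψ : A →ₗ[ℂ] BlockAlg N k) (φ : BlockAlg N k →ₗ[ℂ] A),
      (∀ (m : ℕ) (M : Matrix (Fin m) (Fin m) A), (∀ i j, M i j ∈ S) →
        MatIsPos M → MatIsPos (M.map ψ)) ∧
      StarPos ((1 : BlockAlg N k) - ψ 1) ∧
      (∀ (m : ℕ) (M : Matrix (Fin m) (Fin m) (BlockAlg N k)),
        MatIsPos M → MatIsPos (M.map φ)) ∧
      (∀ x, φ x ∈ S) ∧ StarPos ((1 : A) - φ 1) ∧
      (∀ j : Fin (n + 1), ∀ x y : BlockAlg N k, StarPos x → StarPos y →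
        (∀ i, c i ≠ j → x i = 0) → (∀ i, c i ≠ j → y i = 0) → x * y = 0 →
        φ x * φ y = 0) ∧
      (∀ b ∈ G, ‖φ (ψ b) - b‖ < ε)

/-- `A` has locally finite decomposition rank: it is exhausted, up to arbitrarily small
perturbations, by unital C*-subalgebras of finite decomposition rank. -/
def LocallyFiniteDecompRank (A : Type*) [CStarAlgebra A] : Prop :=
  ∀ (F : Finset A) (ε : ℝ), 0 < ε →
    ∃ S : StarSubalgebra ℂ A, IsClosed (S : Set A) ∧
      (∀ x ∈ F, ∃ y ∈ S, ‖x - y‖ < ε) ∧ ∃ n : ℕ, DecompRankLe S n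

/-- The projections of `A` (and its matrix algebras) separate the tracial states of `A`. -/
def ProjectionsSeparateTraces (A : Type*) [CStarAlgebra A] : Prop :=
  ∀ τ σ : TracialState A,
    (∀ p : MatElem A, p.IsProj → p.traceBy τ = p.traceBy σ) → τ = σ

/-! The Rokhlin towers of `α`, pushed into `A ⊗ M_p` by `a ↦ a ⊗ 1`, are Rokhlin towers of
`α ⊗ id`. Only their approximate centrality needs an argument: every element of the tensor
product is close to a finite sum `∑ aᵢ ⊗ mᵢ`, and `a ⊗ 1` commutes with each `1 ⊗ mᵢ`, so a
contraction of `A` almost commuting with the `aᵢ` almost commutes with the sum. -/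

/-- The `ε`-`δ` form of: `ι` maps bounded central sequences of `A` to central sequences of `T`. -/
def PreservesAlmostCentral {A T : Type*} [CStarAlgebra A] [CStarAlgebra T]
    (ι : A →⋆ₐ[ℂ] T) : Prop :=
  ∀ (F : Finset T) (ε : ℝ), 0 < ε → ∃ (G : Finset A) (δ : ℝ), 0 < δ ∧
    ∀ p : A, ‖p‖ ≤ 1 → (∀ x ∈ G, ‖p * x - x * p‖ < δ) → ∀ b ∈ F, ‖ι p * b - b * ι p‖ < ε

lemma IsProjection.map {A B F : Type*} [Mul A] [Star A] [Mul B] [Star B] [FunLike F A B]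
    [MulHomClass F A B] [StarHomClass F A B] (φ : F) {p : A} (hp : IsProjection p) :
    IsProjection (φ p) :=
  ⟨by rw [← map_star, hp.1], by rw [← map_mul, hp.2]⟩

lemma IsProjection.norm_le_one {A : Type*} [CStarAlgebra A] {p : A} (hp : IsProjection p) :
    ‖p‖ ≤ 1 := by
  have h : ‖p‖ * ‖p‖ = ‖p‖ := by rw [← CStarRing.norm_star_mul_self, hp.1, hp.2]
  nlinarith [norm_nonneg p]

lemma norm_commutator_le_of_norm_le_one {R : Type*} [NormedRing R] {q : R} (hq : ‖q‖ ≤ 1)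
    (b y : R) : ‖q * b - b * q‖ ≤ ‖q * y - y * q‖ + 2 * ‖b - y‖ := by
  have hsplit : q * b - b * q = (q * y - y * q) + (q * (b - y) - (b - y) * q) := by noncomm_ring
  have hqby : ‖q * (b - y)‖ ≤ ‖b - y‖ :=
    (norm_mul_le _ _).trans (mul_le_of_le_one_left (norm_nonneg _) hq)
  have hbyq : ‖(b - y) * q‖ ≤ ‖b - y‖ :=
    (norm_mul_le _ _).trans (mul_le_of_le_one_right (norm_nonneg _) hq)
  calc ‖q * b - b * q‖ ≤ ‖q * y - y * q‖ + (‖q * (b - y)‖ + ‖(b - y) * q‖) := by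
        rw [hsplit]; exact (norm_add_le _ _).trans (by gcongr; exact norm_sub_le _ _)
    _ ≤ ‖q * y - y * q‖ + 2 * ‖b - y‖ := by linarith

section TensorProduct

variable {A M T : Type*} [CStarAlgebra A] [CStarAlgebra M] [CStarAlgebra T]
  (ιA : A →⋆ₐ[ℂ] T) (ιM : M →⋆ₐ[ℂ] T)

lemma exists_sum_eq_of_mem_span_elementary {x : T}
    (hx : x ∈ Submodule.span ℂ {x : T | ∃ a m, x = ιA a * ιM m}) :
    ∃ (n : ℕ) (a : Fin n → A) (m : Fin n → M), x = ∑ i, ιA (a i) * ιM (m i) := by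
  induction hx using Submodule.span_induction with
  | mem x hx =>
    obtain ⟨a, m, rfl⟩ := hx
    exact ⟨1, fun _ => a, fun _ => m, by simp⟩
  | zero => exact ⟨0, ![], ![], by simp⟩
  | add x y _ _ ihx ihy =>
    obtain ⟨n, a, m, rfl⟩ := ihx
    obtain ⟨n', a', m', rfl⟩ := ihy
    refine ⟨n + n', Fin.append a a', Fin.append m m', ?_⟩
    simp [Fin.sum_univ_add]
  | smul c x _ ih =>
    obtain ⟨n, a, m, rfl⟩ := ih
    exact ⟨n, fun i => c • a i, m, by simp [Finset.smul_sum]⟩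

variable {ιA ιM}

lemma norm_commutator_sum_elementary_le (hcomm : ∀ a m, ιA a * ιM m = ιM m * ιA a) (p : A)
    {n : ℕ} (a : Fin n → A) (m : Fin n → M) :
    ‖ιA p * (∑ i, ιA (a i) * ιM (m i)) - (∑ i, ιA (a i) * ιM (m i)) * ιA p‖ ≤
      ∑ i, ‖p * a i - a i * p‖ * ‖ιM (m i)‖ := by
  have hterm : ∀ i, ιA p * (ιA (a i) * ιM (m i)) - ιA (a i) * ιM (m i) * ιA p =
      ιA (p * a i - a i * p) * ιM (m i) := fun i => by
    rw [mul_assoc, ← hcomm p, map_sub, map_mul, map_mul]; noncomm_ring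
  rw [Finset.mul_sum, Finset.sum_mul, ← Finset.sum_sub_distrib]
  simp only [hterm]
  refine (norm_sum_le _ _).trans (Finset.sum_le_sum fun i _ => ?_)
  exact (norm_mul_le _ _).trans (by gcongr; exact NonUnitalStarAlgHom.norm_apply_le ιA _)

/-- With `‖b - ∑ ιA (a i) * ιM (m i)‖ < ε / 4`, take `G = {a i}` and `δ = ε / (2 (∑ ‖ιM (m i)‖ + 1))`:
the commutator is then at most `2 (ε / 4) + δ ∑ ‖ιM (m i)‖ < ε`. -/
lemma exists_almostCentral_control (hcomm : ∀ a m, ιA a * ιM m = ιM m * ιA a)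
    (hdense : Dense (Submodule.span ℂ {x : T | ∃ a m, x = ιA a * ιM m} : Set T))
    (b : T) {ε : ℝ} (hε : 0 < ε) :
    ∃ (G : Finset A) (δ : ℝ), 0 < δ ∧
      ∀ p : A, ‖p‖ ≤ 1 → (∀ x ∈ G, ‖p * x - x * p‖ < δ) → ‖ιA p * b - b * ιA p‖ < ε := by
  classical
  obtain ⟨y, hby, hy⟩ := Metric.dense_iff.mp hdense b (ε / 4) (by positivity)
  obtain ⟨n, a, m, rfl⟩ := exists_sum_eq_of_mem_span_elementary ιA ιM hy
  rw [Metric.mem_ball, dist_comm, dist_eq_norm] at hby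
  set S := ∑ i, ‖ιM (m i)‖
  have hS : 0 ≤ S := Finset.sum_nonneg fun i _ => norm_nonneg _
  refine ⟨Finset.univ.image a, ε / (2 * (S + 1)), by positivity, fun p hp hG => ?_⟩
  have hsum : ∑ i, ‖p * a i - a i * p‖ * ‖ιM (m i)‖ ≤ ε / (2 * (S + 1)) * S := by
    rw [Finset.mul_sum]
    exact Finset.sum_le_sum fun i _ => mul_le_mul_of_nonneg_right
      (hG _ (Finset.mem_image_of_mem a (Finset.mem_univ i))).le (norm_nonneg _)
  have hδS : ε / (2 * (S + 1)) * S ≤ ε / 2 := by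
    rw [div_mul_eq_mul_div, div_le_div_iff₀ (by positivity) two_pos]; nlinarith
  calc ‖ιA p * b - b * ιA p‖
      ≤ ‖ιA p * (∑ i, ιA (a i) * ιM (m i)) - (∑ i, ιA (a i) * ιM (m i)) * ιA p‖ +
          2 * ‖b - ∑ i, ιA (a i) * ιM (m i)‖ :=
        norm_commutator_le_of_norm_le_one
          ((NonUnitalStarAlgHom.norm_apply_le ιA p).trans hp) _ _
    _ < ε := by
        linarith [norm_commutator_sum_elementary_le hcomm p a m]

lemma preservesAlmostCentral_of_commute_of_dense (hcomm : ∀ a m, ιA a * ιM m = ιM m * ιA a)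
    (hdense : Dense (Submodule.span ℂ {x : T | ∃ a m, x = ιA a * ιM m} : Set T)) :
    PreservesAlmostCentral ιA := by
  classical
  intro F ε hε
  induction F using Finset.induction_on with
  | empty => exact ⟨∅, 1, one_pos, by simp⟩
  | insert b F _ ih =>
    obtain ⟨G, δ, hδ, hG⟩ := ih
    obtain ⟨G', δ', hδ', hG'⟩ := exists_almostCentral_control hcomm hdense b hε
    refine ⟨G ∪ G', min δ δ', lt_min hδ hδ', fun p hp hp' => ?_⟩
    have hsmall : ∀ {H : Finset A} {η : ℝ}, H ⊆ G ∪ G' → min δ δ' ≤ η →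
        ∀ x ∈ H, ‖p * x - x * p‖ < η := fun hH hη x hx => (hp' x (hH hx)).trans_le hη
    rintro c hc
    rcases Finset.mem_insert.mp hc with rfl | hc
    · exact hG' p hp (hsmall Finset.subset_union_right (min_le_right _ _))
    · exact hG p hp (hsmall Finset.subset_union_left (min_le_left _ _)) c hc

end TensorProduct

theorem RokhlinProperty.of_semiconj {A T : Type*} [CStarAlgebra A] [CStarAlgebra T]
    {α : A ≃⋆ₐ[ℂ] A} {β : T ≃⋆ₐ[ℂ] T} {ι : A →⋆ₐ[ℂ] T} (hα : RokhlinProperty α)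
    (hβ : ∀ a, β (ι a) = ι (α a)) (hι : PreservesAlmostCentral ι) : RokhlinProperty β := by
  intro ε hε n F
  obtain ⟨G, δ, hδ, hG⟩ := hι F ε hε
  obtain ⟨e, f, he, hf, hee, hff, hef, hesh, hfsh, hec, hfc, hsum⟩ := hα (min δ ε) (by positivity) n G
  have hshift : ∀ x y : A, ‖α x - y‖ < min δ ε → ‖β (ι x) - ι y‖ < ε := fun x y hxy => by
    rw [hβ, ← map_sub]
    exact (NonUnitalStarAlgHom.norm_apply_le ι _).trans_lt (hxy.trans_le (min_le_right _ _))
  have hcomm : ∀ q, IsProjection q → (∀ x ∈ G, ‖q * x - x * q‖ < min δ ε) →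
      ∀ b ∈ F, ‖ι q * b - b * ι q‖ < ε := fun q hq hqG =>
    hG q hq.norm_le_one fun x hx => (hqG x hx).trans_le (min_le_left _ _)
  refine ⟨fun j => ι (e j), fun j => ι (f j), fun j => (he j).map ι, fun j => (hf j).map ι,
    fun i j hij => ?_, fun i j hij => ?_, fun i j => ?_, fun j h => hshift _ _ (hesh j h),
    fun j h => hshift _ _ (hfsh j h), fun j => hcomm _ (he j) (hec j),
    fun j => hcomm _ (hf j) (hfc j), ?_⟩
  · rw [← map_mul, hee i j hij, map_zero]
  · rw [← map_mul, hff i j hij, map_zero]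
  · rw [← map_mul, ← map_mul, (hef i j).1, (hef i j).2, map_zero, and_self]
  · rw [← map_sum, ← map_sum, ← map_add, hsum, map_one]

theorem rokhlin_tensor_uhf_general
    (A : Type) [CStarAlgebra A]
    (α : A ≃⋆ₐ[ℂ] A) (hRok : RokhlinProperty α)
    (M : Type) [CStarAlgebra M]
    (T : Type) [CStarAlgebra T] (ιA : A →⋆ₐ[ℂ] T) (ιM : M →⋆ₐ[ℂ] T)
    (hT : IsMinTensor A M T ιA ιM)
    (β : T ≃⋆ₐ[ℂ] T) (hβ : ∀ (a : A) (m : M), β (ιA a * ιM m) = ιA (α a) * ιM m) :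
    RokhlinProperty β :=
  hRok.of_semiconj (fun a => by simpa using hβ a 1)
    (preservesAlmostCentral_of_commute_of_dense hT.1.commutes hT.1.dense)

/-- If `A` is a unital simple C*-algebra, `α` is an automorphism of `A` with the Rokhlin
property and `p` is a supernatural number, then `α ⊗ id` has the Rokhlin property on
`A ⊗ M_p`. -/
theorem rokhlin_tensor_uhf
    (A : Type) [CStarAlgebra A] (hsimple : SimpleCStar A)
    (α : A ≃⋆ₐ[ℂ] A) (hRok : RokhlinProperty α)
    (s : SupernaturalNumber)
    (M : Type) [CStarAlgebra M] (hM : IsUHF s M)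
    (T : Type) [CStarAlgebra T] (ιA : A →⋆ₐ[ℂ] T) (ιM : M →⋆ₐ[ℂ] T)
    (hT : IsMinTensor A M T ιA ιM)
    (β : T ≃⋆ₐ[ℂ] T) (hβ : ∀ (a : A) (m : M), β (ιA a * ιM m) = ιA (α a) * ιM m) :
    RokhlinProperty β :=
  rokhlin_tensor_uhf_general A α hRok M T ιA ιM hT β hβ
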